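/- arXiv:1210.0405 — 2 statements merged into one kernel-verified Lean document; each statement's English description precedes it below -/
import Mathlib

section
/- τ(n) = min over 0 ≤ v ≤ n of (τ_P(v) + τ_C(n − v)), with the conventions τ_P(0) = 0 and τ_C(0) = 0 excluded appropriately (i.e., the minimum is over splittings n = v + w with v, w ≥ 0, using τ_P(v) for a sum-only part and τ_C(w) for a single-positive-part representation). -/
def nu (d : ℕ) : ℕ := 2 ^ d - 1

def IsABP (n : ℕ) (P : Multiset ℕ) : Prop :=
  (∀ i ∈ P, 1 ≤ i) ∧ (P.map nu).sum = n

noncomputable def tauP (n : ℕ) : ℕ :=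
  sInf {k | ∃ P : Multiset ℕ, IsABP n P ∧ P.card = k}

def IsSABP (n : ℕ) (P N : Multiset ℕ) : Prop :=
  (∀ i ∈ P, 1 ≤ i) ∧ (∀ j ∈ N, 1 ≤ j) ∧
    (n : ℤ) = ((P.map nu).sum : ℤ) - ((N.map nu).sum : ℤ)

noncomputable def tau (n : ℕ) : ℕ :=
  sInf {k | ∃ P N : Multiset ℕ, IsSABP n P N ∧ P.card + N.card = k}

noncomputable def tauC (n : ℕ) : ℕ :=
  sInf {k | ∃ (r : ℕ) (N : Multiset ℕ), IsSABP n {r} N ∧ 1 + N.card = k}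

def greedy : ℕ → Multiset ℕ
  | 0 => 0
  | (n+1) => Nat.log 2 (n+2) ::ₘ greedy (n + 1 - nu (Nat.log 2 (n+2)))
  decreasing_by
    have h1 : 0 < Nat.log 2 (n+2) := Nat.log_pos one_lt_two (by omega)
    have h2 : 2 ^ 1 ≤ 2 ^ Nat.log 2 (n+2) := Nat.pow_le_pow_right (by norm_num) h1
    simp only [nu] at *
    omega

open Classical in
noncomputable def dualf (n : ℕ) : ℕ :=
  if ∃ k : ℕ, 1 ≤ k ∧ n = 2 ^ k - 1 then n else 3 * 2 ^ Nat.log 2 n - n - 2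

def parentT (v : ℕ × ℕ) : ℕ × ℕ := (v.1 + 1, v.2 / 2)

def levelT (v : ℕ × ℕ) : ℕ := v.1 + 1

def treeGraph : SimpleGraph (ℕ × ℕ) where
  Adj u v := parentT u = v ∨ parentT v = u
  symm := ⟨by intro u v h; tauto⟩
  loopless := ⟨by intro v h; simp [parentT, Prod.ext_iff] at h⟩

noncomputable def cutCard (S : Finset (ℕ × ℕ)) : ℕ :=
  Set.ncard {v : ℕ × ℕ | ¬ ((v ∈ S) ↔ (parentT v ∈ S))}

def leafCount (S : Finset (ℕ × ℕ)) : ℕ := (S.filter (fun v => v.1 = 0)).card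

def completeSubtree (v : ℕ × ℕ) : Finset (ℕ × ℕ) :=
  (Finset.range (v.1 + 1)).biUnion (fun a =>
    (Finset.Ico (v.2 * 2 ^ (v.1 - a)) ((v.2 + 1) * 2 ^ (v.1 - a))).image (fun i => (a, i)))

def Bd (d : ℕ) : Finset (ℕ × ℕ) := completeSubtree (d - 1, 0)

def cutBd (d : ℕ) (X : Finset (ℕ × ℕ)) : ℕ :=
  ((Bd d).filter (fun v => v.1 + 1 < d ∧ ¬((v ∈ X) ↔ parentT v ∈ X))).card

noncomputable def deltaB (d i : ℕ) : ℕ :=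
  sInf {c | ∃ X ⊆ Bd d, X.card = i ∧ cutBd d X = c}

noncomputable def tauC0 (n : ℕ) : ℕ := if n = 0 then 0 else tauC n

def fS (S : Finset (ℕ × ℕ)) (v : ℕ × ℕ) : ℤ :=
  if v ∈ S ∧ parentT v ∉ S then 2 ^ levelT v - 1
  else if v ∉ S ∧ parentT v ∈ S then -(2 ^ levelT v - 1)
  else 0

/-
Gluing an optimal sum-only representation of `v` to an optimal single-positive representation of
`n - v` gives `τ(n) ≤ min`. Conversely, an optimal representation `n = Σ_P - Σ_N` has
`|P| ≥ τ_P(n + B)` and `|N| ≥ τ_P(B)` for `B = Σ_N`, and `τ_P(n + B) + τ_P(B)` is bounded below by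
some `τ_P(v) + τ_C(n - v)` by induction on `B`. The induction rests on the optimality of the
greedy algorithm for `τ_P`, which follows from a characterisation by the binary digit sum `s₂`:
`x` is a sum of `k` terms `2^d - 1` (`d ≥ 1`) iff `x + k = 2m` with `s₂(m) ≤ k ≤ m`.
-/

def binDigitSum (n : ℕ) : ℕ := (Nat.digits 2 n).sum

lemma binDigitSum_two_mul (n : ℕ) : binDigitSum (2 * n) = binDigitSum n := by
  rcases n.eq_zero_or_pos with rfl | hn
  · rfl
  · rw [binDigitSum, Nat.digits_def' one_lt_two (by omega)]
    simp [binDigitSum]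

lemma binDigitSum_two_mul_add_one (n : ℕ) : binDigitSum (2 * n + 1) = binDigitSum n + 1 := by
  rw [binDigitSum, Nat.digits_def' one_lt_two (by omega), List.sum_cons,
    show (2 * n + 1) % 2 = 1 by omega, show (2 * n + 1) / 2 = n by omega, binDigitSum, add_comm]

lemma binDigitSum_le (n : ℕ) : binDigitSum n ≤ n := Nat.digit_sum_le 2 n

lemma binDigitSum_succ_le (a : ℕ) : binDigitSum (a + 1) ≤ binDigitSum a + 1 := by
  induction a using Nat.strong_induction_on with
  | _ a ih =>
    obtain ⟨k, rfl | rfl⟩ := Nat.even_or_odd' a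
    · rw [binDigitSum_two_mul_add_one, binDigitSum_two_mul]
    · rw [show 2 * k + 1 + 1 = 2 * (k + 1) by ring, binDigitSum_two_mul,
        binDigitSum_two_mul_add_one]
      have := ih k (by omega)
      omega

lemma binDigitSum_add_two_pow_le (a d : ℕ) : binDigitSum (a + 2 ^ d) ≤ binDigitSum a + 1 := by
  induction d generalizing a with
  | zero => exact binDigitSum_succ_le a
  | succ d ih =>
    obtain ⟨k, rfl | rfl⟩ := Nat.even_or_odd' a
    · rw [show 2 * k + 2 ^ (d + 1) = 2 * (k + 2 ^ d) by ring, binDigitSum_two_mul,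
        binDigitSum_two_mul]
      exact ih k
    · rw [show 2 * k + 1 + 2 ^ (d + 1) = 2 * (k + 2 ^ d) + 1 by ring,
        binDigitSum_two_mul_add_one, binDigitSum_two_mul_add_one]
      exact Nat.add_le_add_right (ih k) 1

lemma binDigitSum_mul_two_pow_add (a : ℕ) {c L : ℕ} (hc : c < 2 ^ L) :
    binDigitSum (a * 2 ^ L + c) = binDigitSum a + binDigitSum c := by
  induction L generalizing c with
  | zero =>
    obtain rfl : c = 0 := by simpa using hc
    simp [binDigitSum]
  | succ L ih =>
    obtain ⟨k, rfl | rfl⟩ := Nat.even_or_odd' c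
    · rw [show a * 2 ^ (L + 1) + 2 * k = 2 * (a * 2 ^ L + k) by ring, binDigitSum_two_mul,
        binDigitSum_two_mul, ih (by rw [pow_succ] at hc; omega)]
    · rw [show a * 2 ^ (L + 1) + (2 * k + 1) = 2 * (a * 2 ^ L + k) + 1 by ring,
        binDigitSum_two_mul_add_one, binDigitSum_two_mul_add_one,
        ih (by rw [pow_succ] at hc; omega), add_assoc]

-- The second alternative is the case where the leading binary digits of `m` are `10`.
lemma binDigitSum_sub_two_pow (j m : ℕ) (h₁ : 2 ^ j ≤ m) (h₂ : m < 4 * 2 ^ j) :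
    binDigitSum (m - 2 ^ j) + 1 ≤ binDigitSum m ∨
      2 * 2 ^ j ≤ m ∧ binDigitSum (m - 2 ^ j) ≤ m - 2 * 2 ^ j + 1 := by
  have hpos : 0 < 2 ^ j := Nat.two_pow_pos j
  obtain ⟨q, c, hc, rfl⟩ : ∃ q c, c < 2 ^ j ∧ m = q * 2 ^ j + c :=
    ⟨m / 2 ^ j, m % 2 ^ j, Nat.mod_lt _ hpos, by rw [mul_comm, Nat.div_add_mod]⟩
  have hq1 : 1 ≤ q := Nat.pos_of_ne_zero (by rintro rfl; omega)
  have hq3 : q < 4 := by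
    by_contra! h
    nlinarith
  have hsub : q * 2 ^ j + c - 2 ^ j = (q - 1) * 2 ^ j + c := by
    rw [Nat.sub_one_mul]
    have : 2 ^ j ≤ q * 2 ^ j := Nat.le_mul_of_pos_left _ hq1
    omega
  rw [hsub, binDigitSum_mul_two_pow_add _ hc, binDigitSum_mul_two_pow_add _ hc]
  have h0 : binDigitSum 0 = 0 := rfl
  have h1 : binDigitSum 1 = 1 := by simp [binDigitSum]
  have h2 : binDigitSum 2 = 1 := by simp [binDigitSum]
  have h3 : binDigitSum 3 = 2 := by simp [binDigitSum]
  have := binDigitSum_le c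
  generalize 2 ^ j = M at *
  interval_cases q <;> simp only [Nat.reduceSub, h0, h1, h2, h3] <;> omega

lemma binDigitSum_sum_map_two_pow_le (D : Multiset ℕ) :
    binDigitSum (D.map (2 ^ ·)).sum ≤ D.card := by
  induction D using Multiset.induction with
  | empty => simp [binDigitSum]
  | cons d D ih =>
    rw [Multiset.map_cons, Multiset.sum_cons, Multiset.card_cons, add_comm]
    exact (binDigitSum_add_two_pow_le _ d).trans (Nat.add_le_add_right ih 1)

lemma sum_map_two_pow_map_succ (D : Multiset ℕ) :
    ((D.map (· + 1)).map (2 ^ ·)).sum = 2 * (D.map (2 ^ ·)).sum := by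
  rw [Multiset.map_map, ← Multiset.sum_map_mul_left]
  exact congrArg _ (Multiset.map_congr rfl fun d _ => pow_succ' 2 d)

lemma exists_sum_map_two_pow_eq_card_binDigitSum (m : ℕ) :
    ∃ D : Multiset ℕ, D.card = binDigitSum m ∧ (D.map (2 ^ ·)).sum = m := by
  induction m using Nat.strong_induction_on with
  | _ m ih =>
    rcases m.eq_zero_or_pos with rfl | hm
    · exact ⟨0, rfl, rfl⟩
    obtain ⟨k, rfl | rfl⟩ := Nat.even_or_odd' m
    · obtain ⟨D, hcard, hsum⟩ := ih k (by omega)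
      exact ⟨D.map (· + 1), by simpa [binDigitSum_two_mul] using hcard,
        by rw [sum_map_two_pow_map_succ, hsum]⟩
    · obtain ⟨D, hcard, hsum⟩ := ih k (by omega)
      refine ⟨0 ::ₘ D.map (· + 1), by simp [binDigitSum_two_mul_add_one, hcard], ?_⟩
      rw [Multiset.map_cons, Multiset.sum_cons, sum_map_two_pow_map_succ, hsum, pow_zero,
        add_comm]

-- Splitting a summand `2 ^ (e + 1)` into two copies of `2 ^ e` adds one summand at a time.
lemma exists_sum_map_two_pow_eq_of_binDigitSum_le {m k : ℕ} (h₁ : binDigitSum m ≤ k)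
    (h₂ : k ≤ m) : ∃ D : Multiset ℕ, D.card = k ∧ (D.map (2 ^ ·)).sum = m := by
  obtain ⟨t, rfl⟩ := Nat.exists_eq_add_of_le h₁
  induction t with
  | zero => exact exists_sum_map_two_pow_eq_card_binDigitSum m
  | succ t ih =>
    obtain ⟨D, hcard, hsum⟩ := ih (by omega) (by omega)
    obtain ⟨e, he⟩ : ∃ e, e + 1 ∈ D := by
      by_contra! h
      have hD : D = Multiset.replicate D.card 0 :=
        Multiset.eq_replicate_card.mpr fun d hd => by
          obtain _ | e := d
          · rfl
          · exact absurd hd (h e)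
      rw [hD] at hsum
      simp at hsum
      omega
    refine ⟨e ::ₘ e ::ₘ D.erase (e + 1), ?_, ?_⟩
    · simp [Multiset.card_erase_of_mem he, hcard]
      have := Multiset.card_pos_iff_exists_mem.mpr ⟨_, he⟩
      omega
    · rw [← Multiset.cons_erase he, Multiset.map_cons, Multiset.sum_cons] at hsum
      simp only [Multiset.map_cons, Multiset.sum_cons]
      rw [← hsum, pow_succ]
      ring

lemma nu_add_one (d : ℕ) : nu d + 1 = 2 ^ d :=
  Nat.sub_add_cancel Nat.one_le_two_pow

lemma sum_map_nu_add_card (Q : Multiset ℕ) :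
    (Q.map nu).sum + Q.card = (Q.map (2 ^ ·)).sum := by
  induction Q using Multiset.induction with
  | empty => simp
  | cons d Q ih =>
    simp only [Multiset.map_cons, Multiset.sum_cons, Multiset.card_cons, ← ih, ← nu_add_one d]
    ring

-- Adding `1` to each of the `k` terms `2 ^ d - 1` (`d ≥ 1`) gives twice a sum of `k` powers of two.
lemma exists_isABP_card_iff (v k : ℕ) :
    (∃ Q, IsABP v Q ∧ Q.card = k) ↔ ∃ m, v + k = 2 * m ∧ binDigitSum m ≤ k ∧ k ≤ m := by
  constructor
  · rintro ⟨Q, ⟨hpos, hsum⟩, rfl⟩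
    set D := Q.map (· - 1)
    have hQ : Q = D.map (· + 1) := by
      rw [Multiset.map_map]
      conv_lhs => rw [← Multiset.map_id Q]
      exact Multiset.map_congr rfl fun i hi => (Nat.sub_add_cancel (hpos i hi)).symm
    have hcard : Q.card = D.card := (Multiset.card_map _ _).symm
    refine ⟨(D.map (2 ^ ·)).sum, ?_, ?_, ?_⟩
    · rw [← sum_map_two_pow_map_succ, ← hQ, ← sum_map_nu_add_card, hsum]
    · exact hcard ▸ binDigitSum_sum_map_two_pow_le D
    · have := sum_map_nu_add_card D
      omega
  · rintro ⟨m, hvk, h₁, h₂⟩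
    obtain ⟨D, hcard, hsum⟩ := exists_sum_map_two_pow_eq_of_binDigitSum_le h₁ h₂
    refine ⟨D.map (· + 1), ⟨by simp, ?_⟩, by simp [hcard]⟩
    have := sum_map_nu_add_card (D.map (· + 1))
    rw [sum_map_two_pow_map_succ, hsum, Multiset.card_map, hcard] at this
    omega

lemma IsABP.cons {w L : ℕ} {Q : Multiset ℕ} (hL : 1 ≤ L) (h : IsABP w Q) :
    IsABP (nu L + w) (L ::ₘ Q) :=
  ⟨by simpa [hL] using h.1, by simp [h.2]⟩

lemma isABP_replicate_one (v : ℕ) : IsABP v (Multiset.replicate v 1) :=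
  ⟨fun i hi => (Multiset.eq_of_mem_replicate hi).ge, by simp [nu]⟩

lemma tauP_le {v : ℕ} {Q : Multiset ℕ} (h : IsABP v Q) : tauP v ≤ Q.card :=
  Nat.sInf_le ⟨Q, h, rfl⟩

lemma exists_isABP_card_tauP (v : ℕ) : ∃ Q, IsABP v Q ∧ Q.card = tauP v :=
  Nat.sInf_mem (s := {k | ∃ Q, IsABP v Q ∧ Q.card = k}) ⟨_, _, isABP_replicate_one v, rfl⟩

lemma tauP_le_self (v : ℕ) : tauP v ≤ v := by
  simpa using tauP_le (isABP_replicate_one v)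

lemma tauP_pos {v : ℕ} (hv : v ≠ 0) : 0 < tauP v := by
  obtain ⟨Q, hQ, hcard⟩ := exists_isABP_card_tauP v
  rw [← hcard, Multiset.card_pos]
  rintro rfl
  exact hv (by simpa using hQ.2.symm)

lemma tauP_nu_add_le {L : ℕ} (hL : 1 ≤ L) (w : ℕ) : tauP (nu L + w) ≤ tauP w + 1 := by
  obtain ⟨Q, hQ, hcard⟩ := exists_isABP_card_tauP w
  simpa [hcard] using tauP_le (hQ.cons hL)

-- The greedy step is optimal: some optimal representation of `v` uses the largest term `nu L ≤ v`.
lemma tauP_sub_nu_add_one_le {v L : ℕ} (hL : 1 ≤ L) (h₁ : 2 ^ L ≤ v + 1)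
    (h₂ : v + 1 < 2 ^ (L + 1)) : tauP (v - nu L) + 1 ≤ tauP v := by
  have hnu := nu_add_one L
  have hpos := tauP_pos (v := v) (by have := Nat.one_lt_two_pow (n := L) (by omega); omega)
  obtain ⟨m, hvk, hm, hkm⟩ := (exists_isABP_card_iff v _).mp (exists_isABP_card_tauP v)
  have hk : tauP v ≤ v - nu L + 1 := by
    have := tauP_nu_add_le hL (v - nu L)
    rw [Nat.add_sub_cancel' (by omega)] at this
    have := tauP_le_self (v - nu L)
    omega
  obtain ⟨j, rfl⟩ : ∃ j, L = j + 1 := ⟨L - 1, by omega⟩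
  rw [pow_succ] at h₁ hnu
  rw [pow_succ, pow_succ] at h₂
  suffices ∃ m', v - nu (j + 1) + (tauP v - 1) = 2 * m' ∧ binDigitSum m' ≤ tauP v - 1 ∧
      tauP v - 1 ≤ m' by
    obtain ⟨Q, hQ, hcard⟩ := (exists_isABP_card_iff _ _).mpr this
    have := tauP_le hQ
    omega
  refine ⟨m - 2 ^ j, by omega, ?_, by omega⟩
  rcases binDigitSum_sub_two_pow j m (by omega) (by omega) with h | ⟨h2m, h⟩ <;> omega

lemma tauC0_le {w r : ℕ} {N : Multiset ℕ} (hr : 1 ≤ r) (hN : ∀ j ∈ N, 1 ≤ j)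
    (h : w + (N.map nu).sum = nu r) : tauC0 w ≤ 1 + N.card := by
  unfold tauC0
  split_ifs
  · exact Nat.zero_le _
  · refine Nat.sInf_le ⟨r, N, ⟨by simpa using hr, hN, ?_⟩, rfl⟩
    simp [← h]

lemma exists_isSABP_card_tauC0 (w : ℕ) : ∃ P N, IsSABP w P N ∧ P.card + N.card = tauC0 w := by
  obtain rfl | hw := Nat.eq_zero_or_pos w
  · exact ⟨0, 0, ⟨by simp, by simp, by simp⟩, by simp [tauC0]⟩
  have hnu : w ≤ nu w := Nat.le_sub_one_of_lt Nat.lt_two_pow_self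
  have hne : {k | ∃ r N, IsSABP w {r} N ∧ 1 + N.card = k}.Nonempty := by
    refine ⟨_, w, Multiset.replicate (nu w - w) 1, ⟨by simp; omega, ?_, ?_⟩, rfl⟩
    · exact fun j hj => (Multiset.eq_of_mem_replicate hj).ge
    · simp [show nu 1 = 1 from rfl, Nat.cast_sub hnu]
  obtain ⟨r, N, hrN, hcard⟩ := Nat.sInf_mem hne
  exact ⟨{r}, N, hrN, by simpa [tauC0, tauC, hw.ne'] using hcard⟩

lemma IsSABP.add_isABP {v w : ℕ} {Q P N : Multiset ℕ} (h : IsSABP w P N) (hQ : IsABP v Q) :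
    IsSABP (w + v) (P + Q) N := by
  refine ⟨?_, h.2.1, ?_⟩
  · simpa [or_imp, forall_and] using And.intro h.1 hQ.1
  · simp only [Multiset.map_add, Multiset.sum_add, Nat.cast_add, ← hQ.2, h.2.2]
    ring

lemma IsSABP.isABP {n : ℕ} {P N : Multiset ℕ} (h : IsSABP n P N) :
    IsABP (n + (N.map nu).sum) P :=
  ⟨h.1, by have := h.2.2; omega⟩

lemma tau_le_tauP_add_tauC0 {n v : ℕ} (hv : v ≤ n) : tau n ≤ tauP v + tauC0 (n - v) := by
  obtain ⟨Q, hQ, hQcard⟩ := exists_isABP_card_tauP v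
  obtain ⟨P, N, hPN, hcard⟩ := exists_isSABP_card_tauC0 (n - v)
  refine Nat.sInf_le ⟨P + Q, N, ?_, by simp [← hQcard, ← hcard]; ring⟩
  simpa [Nat.sub_add_cancel hv] using hPN.add_isABP hQ

lemma exists_isSABP_card_tau (n : ℕ) : ∃ P N, IsSABP n P N ∧ P.card + N.card = tau n :=
  Nat.sInf_mem (s := {k | ∃ P N, IsSABP n P N ∧ P.card + N.card = k})
    ⟨_, _, 0, ⟨(isABP_replicate_one n).1, by simp, by rw [(isABP_replicate_one n).2]; simp⟩, rfl⟩

/- With `nu L` the largest term `≤ n + B`: if `B ≤ nu L`, the single positive term `nu L` absorbs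
the negative part `B`; otherwise the greedy step lowers both `tauP (n + B)` and `tauP B` by one,
and we recurse on `B - nu L`. -/
lemma exists_tauP_add_tauC0_le (n B : ℕ) :
    ∃ v ≤ n, tauP v + tauC0 (n - v) ≤ tauP (n + B) + tauP B := by
  induction B using Nat.strong_induction_on with
  | _ B ih =>
    rcases Nat.eq_zero_or_pos B with rfl | hB
    · exact ⟨n, le_rfl, by simp [tauC0]⟩
    set L := Nat.log 2 (n + B + 1)
    have hL : 1 ≤ L := Nat.log_pos one_lt_two (by omega)
    have h₁ : 2 ^ L ≤ n + B + 1 := Nat.pow_log_le_self 2 (by omega)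
    have h₂ : n + B + 1 < 2 ^ (L + 1) := Nat.lt_pow_succ_log_self one_lt_two _
    have hnu := nu_add_one L
    have hgreedy := tauP_sub_nu_add_one_le hL h₁ h₂
    by_cases hBL : B ≤ nu L
    · obtain ⟨N, hN, hcard⟩ := exists_isABP_card_tauP B
      have hC : tauC0 (n - (n + B - nu L)) ≤ 1 + N.card :=
        tauC0_le hL hN.1 (by rw [hN.2]; omega)
      exact ⟨n + B - nu L, by omega, by omega⟩
    · have hgreedyB := tauP_sub_nu_add_one_le (v := B) hL (by omega) (by omega)
      obtain ⟨v, hv, hle⟩ := ih (B - nu L) (by omega)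
      rw [show n + (B - nu L) = n + B - nu L by omega] at hle
      exact ⟨v, hv, by omega⟩

theorem stmt11 (n : ℕ) :
    tau n = (Finset.range (n + 1)).inf' (by simp) (fun v => tauP v + tauC0 (n - v)) := by
  apply le_antisymm
  · obtain ⟨v, hv, hmin⟩ := Finset.exists_mem_eq_inf' (by simp : (Finset.range (n + 1)).Nonempty)
      (fun v => tauP v + tauC0 (n - v))
    rw [hmin]
    exact tau_le_tauP_add_tauC0 (Nat.lt_succ_iff.mp (Finset.mem_range.mp hv))
  · obtain ⟨P, N, hPN, hcard⟩ := exists_isSABP_card_tau n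
    obtain ⟨v, hv, hle⟩ := exists_tauP_add_tauC0_le n (N.map nu).sum
    calc (Finset.range (n + 1)).inf' _ (fun v => tauP v + tauC0 (n - v))
        ≤ tauP v + tauC0 (n - v) := Finset.inf'_le _ (Finset.mem_range.mpr (by omega))
      _ ≤ tauP (n + (N.map nu).sum) + tauP (N.map nu).sum := hle
      _ ≤ P.card + N.card := add_le_add (tauP_le hPN.isABP) (tauP_le ⟨hPN.2.1, rfl⟩)
      _ = tau n := hcard
end

section
/- The edge isoperimetric peak of the complete binary tree B_d of depth d (with 2^d − 1 vertices) satisfies max_{1 ≤ i ≤ 2^d − 1} δ(i, B_d) ≥ ⌊d/3⌋ − 1, where δ(i, B_d) is the minimum number of edges in a cut (X, X̄) over all vertex subsets X of B_d with |X| = i. -/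
/-! For `X ⊆ B_d`, every cut edge `(w, parent w)` contributes `±|T_w|` to `|X|`, where `T_w` is
the complete subtree below `w`, so `|X|` is a signed sum of `cut + 1` numbers of the form
`2 ^ k - 1` (the extra term belongs to the root). Adding or subtracting `2 ^ k - 1` creates at most
three new changes between consecutive binary digits of an integer, hence `|X|` has at most
`3 (cut + 1)` of them. The number `101…01₂ < 2 ^ d` has about `d` such changes, which forces every
set of that size to have a cut of size at least `⌊d / 3⌋ - 1`. -/

/-- The number of positions at which consecutive digits of the two's complement expansion of `x`
differ; `0` and `-1` are the fixed points of `x ↦ x / 2`. -/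
def bitChanges (x : ℤ) : ℕ :=
  if x = 0 ∨ x = -1 then 0 else (if x % 2 = x / 2 % 2 then 0 else 1) + bitChanges (x / 2)
termination_by x.natAbs
decreasing_by omega

@[simp] lemma bitChanges_zero : bitChanges 0 = 0 := by rw [bitChanges]; simp

@[simp] lemma bitChanges_neg_one : bitChanges (-1) = 0 := by rw [bitChanges]; simp

lemma bitChanges_eq (x : ℤ) :
    bitChanges x = (if x % 2 = x / 2 % 2 then 0 else 1) + bitChanges (x / 2) := by
  by_cases h : x = 0 ∨ x = -1
  · rcases h with rfl | rfl <;> simp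
  · rw [bitChanges, if_neg h]

lemma bitChanges_two_mul_add (x r : ℤ) (hr : r = 0 ∨ r = 1) :
    bitChanges (2 * x + r) = (if r = x % 2 then 0 else 1) + bitChanges x := by
  rw [bitChanges_eq, show (2 * x + r) / 2 = x by omega, show (2 * x + r) % 2 = r by omega]

@[simp] lemma bitChanges_one : bitChanges 1 = 1 := by
  simpa using bitChanges_two_mul_add 0 1 (by simp)

lemma bitChanges_neg_sub_one (x : ℤ) : bitChanges (-x - 1) = bitChanges x := by
  induction x using bitChanges.induct with
  | case1 x hx => rcases hx with rfl | rfl <;> simp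
  | case2 x _ ih =>
    rw [bitChanges_eq x, show -x - 1 = 2 * (-(x / 2) - 1) + (1 - x % 2) by omega,
      bitChanges_two_mul_add _ _ (by omega), ih]
    congr 1
    split_ifs <;> omega

lemma bitChanges_add_one_le (x : ℤ) : bitChanges (x + 1) ≤ bitChanges x + 1 := by
  induction x using bitChanges.induct with
  | case1 x hx => rcases hx with rfl | rfl <;> simp
  | case2 x _ ih =>
    rw [bitChanges_eq x]
    rcases Int.emod_two_eq_zero_or_one x with h | h
    · rw [show x + 1 = 2 * (x / 2) + 1 by omega, bitChanges_two_mul_add _ _ (by omega)]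
      split_ifs <;> omega
    · rw [show x + 1 = 2 * (x / 2 + 1) + 0 by omega, bitChanges_two_mul_add _ _ (by omega)]
      split_ifs <;> omega

lemma bitChanges_sub_one_le (x : ℤ) : bitChanges (x - 1) ≤ bitChanges x + 1 := by
  have h := bitChanges_add_one_le (-x - 1)
  rwa [bitChanges_neg_sub_one, show -x - 1 + 1 = -(x - 1) - 1 by ring,
    bitChanges_neg_sub_one] at h

lemma bitChanges_add_two_pow_le (k : ℕ) (x : ℤ) : bitChanges (x + 2 ^ k) ≤ bitChanges x + 2 := by
  induction k generalizing x with
  | zero => simpa using (bitChanges_add_one_le x).trans (Nat.le_succ _)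
  | succ k ih =>
    have hr : x % 2 = 0 ∨ x % 2 = 1 := Int.emod_two_eq_zero_or_one x
    have hsplit := bitChanges_eq x
    rw [show x + 2 ^ (k + 1) = 2 * (x / 2 + 2 ^ k) + x % 2 by rw [pow_succ]; omega,
      bitChanges_two_mul_add _ _ hr]
    rcases k with _ | j
    · have := bitChanges_add_one_le (x / 2)
      simp only [pow_zero] at hsplit ⊢
      split_ifs at hsplit ⊢ <;> omega
    · have hpar : (x / 2 + 2 ^ (j + 1)) % 2 = x / 2 % 2 := by rw [pow_succ]; omega
      have := ih (x / 2)
      rw [hpar]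
      split_ifs at hsplit ⊢ <;> omega

lemma bitChanges_sub_two_pow_le (k : ℕ) (x : ℤ) : bitChanges (x - 2 ^ k) ≤ bitChanges x + 2 := by
  have h := bitChanges_add_two_pow_le k (-x - 1)
  rwa [bitChanges_neg_sub_one, show -x - 1 + 2 ^ k = -(x - 2 ^ k) - 1 by ring,
    bitChanges_neg_sub_one] at h

lemma bitChanges_add_two_pow_sub_one_le (k : ℕ) (x : ℤ) :
    bitChanges (x + (2 ^ k - 1)) ≤ bitChanges x + 3 :=
  calc bitChanges (x + (2 ^ k - 1)) = bitChanges ((x - 1) + 2 ^ k) := by ring_nf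
    _ ≤ bitChanges (x - 1) + 2 := bitChanges_add_two_pow_le k _
    _ ≤ bitChanges x + 3 := by linarith [bitChanges_sub_one_le x]

lemma bitChanges_sub_two_pow_sub_one_le (k : ℕ) (x : ℤ) :
    bitChanges (x - (2 ^ k - 1)) ≤ bitChanges x + 3 :=
  calc bitChanges (x - (2 ^ k - 1)) = bitChanges ((x + 1) - 2 ^ k) := by ring_nf
    _ ≤ bitChanges (x + 1) + 2 := bitChanges_sub_two_pow_le k _
    _ ≤ bitChanges x + 3 := by linarith [bitChanges_add_one_le x]

lemma bitChanges_sum_le {ι : Type*} (s : Finset ι) (g : ι → ℤ)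
    (hg : ∀ w ∈ s, ∃ k : ℕ, g w = 2 ^ k - 1 ∨ g w = -(2 ^ k - 1)) :
    bitChanges (∑ w ∈ s, g w) ≤ 3 * s.card := by
  classical
  induction s using Finset.induction_on with
  | empty => simp
  | insert a s ha ih =>
    rw [Finset.sum_insert ha, Finset.card_insert_of_notMem ha, add_comm (g a)]
    have ih := ih fun w hw ↦ hg w (Finset.mem_insert_of_mem hw)
    obtain ⟨k, hk | hk⟩ := hg a (Finset.mem_insert_self a s) <;> rw [hk]
    · linarith [bitChanges_add_two_pow_sub_one_le k (∑ w ∈ s, g w)]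
    · rw [← sub_eq_add_neg]
      linarith [bitChanges_sub_two_pow_sub_one_le k (∑ w ∈ s, g w)]

lemma exists_odd_lt_four_pow_bitChanges_eq (p : ℕ) :
    ∃ n : ℕ, n % 2 = 1 ∧ n < 4 ^ (p + 1) ∧ bitChanges n = 2 * p + 1 := by
  induction p with
  | zero => exact ⟨1, rfl, by norm_num, by simp⟩
  | succ p ih =>
    obtain ⟨n, hodd, hlt, hbits⟩ := ih
    refine ⟨4 * n + 1, by omega, by rw [pow_succ]; omega, ?_⟩
    rw [show ((4 * n + 1 : ℕ) : ℤ) = 2 * (2 * n + 0) + 1 by push_cast; ring,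
      bitChanges_two_mul_add _ _ (by simp), bitChanges_two_mul_add _ _ (by simp), hbits]
    split_ifs <;> omega

lemma mem_completeSubtree {a i b j : ℕ} :
    (b, j) ∈ completeSubtree (a, i) ↔
      b ≤ a ∧ i * 2 ^ (a - b) ≤ j ∧ j < (i + 1) * 2 ^ (a - b) := by
  simp only [completeSubtree, Finset.mem_biUnion, Finset.mem_range, Finset.mem_image,
    Finset.mem_Ico, Prod.mk.injEq]
  constructor
  · rintro ⟨b, hb, j, hj, rfl, rfl⟩
    exact ⟨by omega, hj⟩
  · rintro ⟨hb, hj⟩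
    exact ⟨b, by omega, j, hj, rfl, rfl⟩

lemma completeSubtree_zero (i : ℕ) : completeSubtree (0, i) = {(0, i)} := by
  ext ⟨b, j⟩
  simp only [mem_completeSubtree, Finset.mem_singleton, Prod.mk.injEq]
  constructor
  · rintro ⟨hb, hj⟩
    obtain rfl : b = 0 := by omega
    simp only [Nat.sub_zero, pow_zero, mul_one] at hj
    omega
  · rintro ⟨rfl, rfl⟩
    simp

lemma completeSubtree_succ (a i : ℕ) :
    completeSubtree (a + 1, i) =
      insert (a + 1, i) (completeSubtree (a, 2 * i) ∪ completeSubtree (a, 2 * i + 1)) := by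
  ext ⟨b, j⟩
  simp only [mem_completeSubtree, Finset.mem_insert, Finset.mem_union, Prod.mk.injEq]
  by_cases hba : b ≤ a
  · rw [show a + 1 - b = a - b + 1 by omega, pow_succ]
    ring_nf
    omega
  · obtain rfl | hb : b = a + 1 ∨ a + 1 < b := by omega
    · simp only [Nat.sub_self, pow_zero, mul_one, true_and]
      omega
    · omega

lemma disjoint_completeSubtree_children (a i : ℕ) :
    Disjoint (completeSubtree (a, 2 * i)) (completeSubtree (a, 2 * i + 1)) := by
  rw [Finset.disjoint_left]
  rintro ⟨b, j⟩ h₁ h₂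
  rw [mem_completeSubtree] at h₁ h₂
  nlinarith

lemma mk_succ_notMem_completeSubtree (a i j : ℕ) : (a + 1, j) ∉ completeSubtree (a, i) := by
  rw [mem_completeSubtree]
  omega

lemma card_completeSubtree (a i : ℕ) : (completeSubtree (a, i)).card = 2 ^ (a + 1) - 1 := by
  induction a generalizing i with
  | zero => simp [completeSubtree_zero]
  | succ a ih =>
    rw [completeSubtree_succ, Finset.card_insert_of_notMem, Finset.card_union_of_disjoint
      (disjoint_completeSubtree_children a i), ih, ih]
    · have : 1 ≤ 2 ^ (a + 1) := Nat.one_le_two_pow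
      rw [pow_succ 2 (a + 1)]
      omega
    · simp [mk_succ_notMem_completeSubtree]

lemma fS_eq (S : Finset (ℕ × ℕ)) (v : ℕ × ℕ) :
    fS S v = (2 ^ levelT v - 1) *
      ((if v ∈ S then 1 else 0) - (if parentT v ∈ S then 1 else 0)) := by
  unfold fS
  by_cases hv : v ∈ S <;> by_cases hp : parentT v ∈ S <;> simp [hv, hp]

lemma sum_indicator_completeSubtree (X : Finset (ℕ × ℕ)) (a i : ℕ) :
    (∑ v ∈ completeSubtree (a, i), if v ∈ X then (1 : ℤ) else 0) =
      ∑ w ∈ completeSubtree (a, i), fS X w +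
        (2 ^ (a + 1) - 1) * (if parentT (a, i) ∈ X then 1 else 0) := by
  induction a generalizing i with
  | zero => simp only [completeSubtree_zero, Finset.sum_singleton, fS_eq, levelT]; ring
  | succ a ih =>
    have hroot : (a + 1, i) ∉ completeSubtree (a, 2 * i) ∪ completeSubtree (a, 2 * i + 1) := by
      simp [mk_succ_notMem_completeSubtree]
    have hparent₀ : parentT (a, 2 * i) = (a + 1, i) := by simp [parentT]
    have hparent₁ : parentT (a, 2 * i + 1) = (a + 1, i) := by simp [parentT]; omega
    simp only [completeSubtree_succ, Finset.sum_insert hroot,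
      Finset.sum_union (disjoint_completeSubtree_children a i), ih, fS_eq X (a + 1, i),
      hparent₀, hparent₁, levelT]
    ring

lemma exists_fS_eq_two_pow_sub_one (S : Finset (ℕ × ℕ)) (v : ℕ × ℕ) :
    ∃ k : ℕ, fS S v = 2 ^ k - 1 ∨ fS S v = -(2 ^ k - 1) := by
  unfold fS
  split_ifs
  exacts [⟨_, .inl rfl⟩, ⟨_, .inr rfl⟩, ⟨0, by simp⟩]

lemma card_Bd {d : ℕ} (hd : 1 ≤ d) : (Bd d).card = 2 ^ d - 1 := by
  rw [Bd, card_completeSubtree, Nat.sub_add_cancel hd]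

lemma card_eq_sum_fS_Bd {d : ℕ} {X : Finset (ℕ × ℕ)} (hX : X ⊆ Bd d) :
    (X.card : ℤ) = ∑ w ∈ Bd d, fS X w := by
  rw [Bd] at hX ⊢
  have h := sum_indicator_completeSubtree X (d - 1) 0
  have hparent : parentT (d - 1, 0) ∉ X := fun h ↦
    mk_succ_notMem_completeSubtree (d - 1) 0 (0 / 2) (hX h)
  rw [if_neg hparent, mul_zero, add_zero, Finset.sum_boole, Finset.filter_mem_eq_inter,
    Finset.inter_eq_right.mpr hX] at h
  exact h

lemma card_filter_fS_ne_zero_le {d : ℕ} (hd : 1 ≤ d) (X : Finset (ℕ × ℕ)) :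
    {w ∈ Bd d | fS X w ≠ 0}.card ≤ cutBd d X + 1 := by
  refine (Finset.card_le_card fun w hw ↦ ?_).trans (Finset.card_insert_le (d - 1, 0) _)
  obtain ⟨hwB, hw⟩ := Finset.mem_filter.mp hw
  rw [Finset.mem_insert, Finset.mem_filter]
  by_cases hroot : w = (d - 1, 0)
  · exact .inl hroot
  refine .inr ⟨hwB, ?_, fun hiff ↦ hw ?_⟩
  · obtain ⟨b, j⟩ := w
    rw [Bd, mem_completeSubtree] at hwB
    obtain ⟨hb, -, hj⟩ := hwB
    by_contra
    obtain rfl : b = d - 1 := by omega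
    simp_all
  · by_cases hwX : w ∈ X <;> simp [fS, hwX, ← hiff]

lemma bitChanges_card_le_cutBd {d : ℕ} (hd : 1 ≤ d) {X : Finset (ℕ × ℕ)} (hX : X ⊆ Bd d) :
    bitChanges X.card ≤ 3 * (cutBd d X + 1) := by
  rw [card_eq_sum_fS_Bd hX, ← Finset.sum_filter_ne_zero]
  calc bitChanges (∑ w ∈ Bd d with fS X w ≠ 0, fS X w)
      ≤ 3 * {w ∈ Bd d | fS X w ≠ 0}.card :=
        bitChanges_sum_le _ _ fun w _ ↦ exists_fS_eq_two_pow_sub_one X w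
    _ ≤ 3 * (cutBd d X + 1) := Nat.mul_le_mul_left 3 (card_filter_fS_ne_zero_le hd X)

lemma le_deltaB {d n c : ℕ} (hd : 1 ≤ d) (hn : n ≤ 2 ^ d - 1)
    (h : ∀ X ⊆ Bd d, X.card = n → c ≤ cutBd d X) : c ≤ deltaB d n := by
  obtain ⟨Y, hY, hYcard⟩ := Finset.exists_subset_card_eq (s := Bd d) (n := n) (by rwa [card_Bd hd])
  refine le_csInf ⟨_, Y, hY, hYcard, rfl⟩ ?_
  rintro _ ⟨X, hX, hXcard, rfl⟩
  exact h X hX hXcard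

theorem stmt19_general (d : ℕ) :
    d / 3 - 1 ≤ (Finset.Icc 1 (2 ^ d - 1)).sup (fun i => deltaB d i) := by
  rcases Nat.lt_or_ge d 6 with hd | hd
  · rw [show d / 3 - 1 = 0 by omega]
    exact Nat.zero_le _
  obtain ⟨n, hodd, hlt, hbits⟩ := exists_odd_lt_four_pow_bitChanges_eq (d / 2 - 1)
  have hn : n ≤ 2 ^ d - 1 := by
    have : 4 ^ (d / 2 - 1 + 1) ≤ 2 ^ d := by
      rw [show (4 : ℕ) = 2 ^ 2 by norm_num, ← pow_mul]
      exact Nat.pow_le_pow_right two_pos (by omega)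
    omega
  refine le_trans ?_ (Finset.le_sup (Finset.mem_Icc.mpr ⟨by omega, hn⟩))
  refine le_deltaB (by omega) hn fun X hX hcard ↦ ?_
  have hbound := bitChanges_card_le_cutBd (by omega) hX
  rw [hcard, hbits] at hbound
  omega

theorem stmt19 (d : ℕ) (hd : 1 ≤ d) :
    d / 3 - 1 ≤ (Finset.Icc 1 (2 ^ d - 1)).sup (fun i => deltaB d i) :=
  stmt19_general d
end
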